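/- Let f be a positive, nondecreasing, continuous function on [3,∞) such that ∫₃^∞ r/f(r) dr = ∞. Then ∫₃^∞ r/(f(r) + ln ln r) dr = ∞. -/
import Mathlib

open MeasureTheory Set
open scoped ENNReal

/-- If `f` is positive, nondecreasing and continuous on `[3, ∞)` and
`∫₃^∞ r / f r dr = ∞`, then `∫₃^∞ r / (f r + ln ln r) dr = ∞`. -/
theorem stmt0 (f : ℝ → ℝ)
    (hpos : ∀ r ∈ Ici (3 : ℝ), 0 < f r)
    (hmono : MonotoneOn f (Ici (3 : ℝ)))
    (hcont : ContinuousOn f (Ici (3 : ℝ)))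
    (hdiv : ∫⁻ r in Ici (3 : ℝ), ENNReal.ofReal (r / f r) = ∞) :
    ∫⁻ r in Ici (3 : ℝ),
      ENNReal.ofReal (r / (f r + Real.log (Real.log r))) = ∞ := by
  set L : ℝ → ℝ := fun r => Real.log (Real.log r) with hLdef
  have h1log : ∀ r : ℝ, 3 ≤ r → 1 < Real.log r := by
    intro r hr
    have h3 : (1 : ℝ) < Real.log 3 := by
      rw [Real.lt_log_iff_exp_lt (by norm_num)]
      exact lt_of_lt_of_le Real.exp_one_lt_d9 (by norm_num)
    exact lt_of_lt_of_le h3 (Real.log_le_log (by norm_num) hr)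
  have hLpos : ∀ r : ℝ, 3 ≤ r → 0 < L r := fun r hr =>
    Real.log_pos (h1log r hr)
  have hLmono : ∀ a b : ℝ, 3 ≤ a → a ≤ b → L a ≤ L b := by
    intro a b ha hab
    exact Real.log_le_log (lt_trans one_pos (h1log a ha))
      (Real.log_le_log (by linarith) hab)
  have hLle : ∀ r : ℝ, 3 ≤ r → L r ≤ r := by
    intro r hr
    calc L r ≤ Real.log r := Real.log_le_self (le_of_lt (lt_trans one_pos (h1log r hr)))
    _ ≤ r := Real.log_le_self (by linarith)
  by_cases hB : ∀ N : ℝ, ∃ r, N ≤ r ∧ 3 ≤ r ∧ f r < L r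
  · -- the set where f r < L r is unbounded
    have key : ∀ N : ℝ, ENNReal.ofReal N ≤
        ∫⁻ r in Ici (3 : ℝ), ENNReal.ofReal (r / (f r + L r)) := by
      intro N
      obtain ⟨r₀, hr₀N, hr₀3, hr₀f⟩ := hB (max 6 (8 * N))
      have h6 : (6 : ℝ) ≤ r₀ := le_trans (le_max_left _ _) hr₀N
      have h8N : 8 * N ≤ r₀ := le_trans (le_max_right _ _) hr₀N
      have hsub : Icc (r₀ / 2) r₀ ⊆ Ici (3 : ℝ) := by
        intro x hx; simp only [mem_Icc] at hx; simp only [mem_Ici]; linarith [hx.1]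
      calc ENNReal.ofReal N
          ≤ ENNReal.ofReal (1/4) * volume (Icc (r₀ / 2) r₀) := by
            rw [Real.volume_Icc, ← ENNReal.ofReal_mul (by norm_num)]
            exact ENNReal.ofReal_le_ofReal (by nlinarith)
        _ = ∫⁻ _ in Icc (r₀ / 2) r₀, ENNReal.ofReal (1/4) :=
            (setLIntegral_const _ _).symm
        _ ≤ ∫⁻ r in Icc (r₀ / 2) r₀, ENNReal.ofReal (r / (f r + L r)) := by
            apply setLIntegral_mono' measurableSet_Icc
            intro x hx
            simp only [mem_Icc] at hx
            have hx3 : (3 : ℝ) ≤ x := by linarith [hx.1]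
            apply ENNReal.ofReal_le_ofReal
            have hd : 0 < f x + L x := add_pos (hpos x hx3) (hLpos x hx3)
            have hfu : f x ≤ f r₀ := hmono hx3 hr₀3 hx.2
            have hLu : L x ≤ L r₀ := hLmono x r₀ hx3 hx.2
            have hdu : f x + L x ≤ 2 * r₀ := by
              have := hLle r₀ hr₀3; linarith
            rw [div_le_div_iff₀ (by norm_num) hd]
            nlinarith [hx.1]
        _ ≤ ∫⁻ r in Ici (3 : ℝ), ENNReal.ofReal (r / (f r + L r)) :=
            lintegral_mono_set hsub
    by_contra h
    have hlt := key ((∫⁻ r in Ici (3 : ℝ),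
      ENNReal.ofReal (r / (f r + L r))).toReal + 1)
    rw [ENNReal.ofReal_le_iff_le_toReal h] at hlt
    linarith [hlt]
  · push_neg at hB
    obtain ⟨N, hN⟩ := hB
    set R : ℝ := max N 3 with hRdef
    have hR3 : (3 : ℝ) ≤ R := le_max_right _ _
    have hRL : ∀ r : ℝ, R ≤ r → L r ≤ f r := by
      intro r hr
      exact hN r (le_trans (le_max_left _ _) hr) (le_trans hR3 hr)
    -- ∫ over Ico 3 R of r / f r is finite
    have hf3 : 0 < f 3 := hpos 3 (by norm_num)
    have hfin : ∫⁻ r in Ico (3 : ℝ) R, ENNReal.ofReal (r / f r) ≠ ∞ := by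
      have hb : ∫⁻ r in Ico (3 : ℝ) R, ENNReal.ofReal (r / f r) ≤
          ENNReal.ofReal (R / f 3) * volume (Ico (3 : ℝ) R) := by
        rw [← setLIntegral_const]
        apply setLIntegral_mono' measurableSet_Ico
        intro x hx
        simp only [mem_Ico] at hx
        apply ENNReal.ofReal_le_ofReal
        have hfx : f 3 ≤ f x := hmono (by norm_num) hx.1 hx.1
        have : 0 < f x := hpos x hx.1
        rw [div_le_div_iff₀ this hf3]
        nlinarith [hx.1, hx.2]
      refine ne_top_of_le_ne_top ?_ hb
      rw [Real.volume_Ico]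
      exact ENNReal.mul_ne_top ENNReal.ofReal_ne_top ENNReal.ofReal_ne_top
    have hsplit : Ici (3 : ℝ) = Ico 3 R ∪ Ici R := by
      rw [Ico_union_Ici_eq_Ici hR3]
    have htail : ∫⁻ r in Ici R, ENNReal.ofReal (r / f r) = ∞ := by
      by_contra ht
      apply absurd hdiv
      rw [hsplit, lintegral_union measurableSet_Ici
        (by rw [Set.disjoint_left]; rintro a ha ha'
            exact absurd (mem_Ici.1 ha') (not_le.2 (mem_Ico.1 ha).2))]
      exact ENNReal.add_ne_top.2 ⟨hfin, ht⟩
    have hge : ∫⁻ r in Ici R, ENNReal.ofReal (r / f r) / 2 ≤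
        ∫⁻ r in Ici R, ENNReal.ofReal (r / (f r + L r)) := by
      apply setLIntegral_mono' measurableSet_Ici
      intro x hx
      simp only [mem_Ici] at hx
      have hx3 : (3 : ℝ) ≤ x := le_trans hR3 hx
      have hfx : 0 < f x := hpos x hx3
      have hLx : L x ≤ f x := hRL x hx
      have h2 : ENNReal.ofReal (x / f x / 2) = ENNReal.ofReal (x / f x) / 2 := by
        rw [ENNReal.ofReal_div_of_pos (by norm_num : (0:ℝ) < 2)]
        norm_num
      rw [← h2]
      apply ENNReal.ofReal_le_ofReal
      rw [div_div, div_le_div_iff₀ (by positivity) (add_pos hfx (hLpos x hx3))]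
      nlinarith
    have hhalf : ∫⁻ r in Ici R, ENNReal.ofReal (r / f r) / 2 = ∞ := by
      simp_rw [ENNReal.div_eq_inv_mul]
      rw [lintegral_const_mul' _ _ (by simp), htail]
      simp
    refine top_le_iff.mp ?_
    calc (∞ : ℝ≥0∞) = ∫⁻ r in Ici R, ENNReal.ofReal (r / f r) / 2 := hhalf.symm
      _ ≤ ∫⁻ r in Ici R, ENNReal.ofReal (r / (f r + L r)) := hge
      _ ≤ ∫⁻ r in Ici (3 : ℝ), ENNReal.ofReal (r / (f r + L r)) :=
          lintegral_mono_set (Ici_subset_Ici.2 hR3)
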